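/- Let F = {0, s, half, bits} with 0 a constant and s, half, bits unary, and let A be the ordered (F ∪ F#)-algebra on ℕ (with the standard order) given by 0_A = 0, s_A(x) = x + 1, half_A(x) = max{0, x − 1}, bits_A(x) = x, and f#_A = f_A for every f ∈ F. Let ≿ be a precedence with half ≻ s and bits ≻ s. Then the generalized weighted path order >_gwpo induced by A and ≿ orients all five rules: half(0) >_gwpo 0, half(s(0)) >_gwpo 0, half(s(s(x))) >_gwpo s(half(x)), bits(0) >_gwpo 0, and bits(s(x)) >_gwpo s(bits(half(s(x)))). -/
import Mathlib


/-- First-order terms over a signature `F` with arity function `ar` and variables `V`. -/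
inductive Term (F : Type) (ar : F → ℕ) (V : Type) : Type where
  | var : V → Term F ar V
  | app : (f : F) → (Fin (ar f) → Term F ar V) → Term F ar V

namespace Term

variable {F V : Type} {ar : F → ℕ}

/-- Application of a substitution `σ : V → Term F ar V` to a term. -/
def subst (σ : V → Term F ar V) : Term F ar V → Term F ar V
  | var v => σ v
  | app f args => app f (fun i => (args i).subst σ)

/-- Interpretation of a term in an `F`-algebra with carrier `A` under assignment `α`. -/
def eval {A : Type} (I : (f : F) → (Fin (ar f) → A) → A) (α : V → A) :
    Term F ar V → A
  | var v => α v
  | app f args => I f (fun i => (args i).eval I α)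

/-- A term is a non-variable term (function application). -/
def IsApp : Term F ar V → Prop
  | var _ => False
  | app _ _ => True

end Term

section Algebra

variable {F V A : Type}

/-- `RC lt a b` : reflexive closure of the strict order `lt`, i.e. `a ≤ b`. -/
def RC (lt : A → A → Prop) (a b : A) : Prop := lt a b ∨ a = b

variable (ar : F → ℕ) (I : (f : F) → (Fin (ar f) → A) → A) (lt : A → A → Prop)

/-- `s >_A t` : `[α](t) < [α](s)` for every assignment `α`. -/
def GTA (s t : Term F ar V) : Prop := ∀ α : V → A, lt (t.eval I α) (s.eval I α)

/-- `s ≥_A t` : `[α](t) ≤ [α](s)` for every assignment `α`. -/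
def GEA (s t : Term F ar V) : Prop := ∀ α : V → A, RC lt (t.eval I α) (s.eval I α)

/-- The algebra is simple: `f_A(a_1, …, a_n) ≥ a_i`. -/
def Simple : Prop := ∀ (f : F) (as : Fin (ar f) → A) (i : Fin (ar f)), RC lt (as i) (I f as)

/-- The algebra is weakly monotone: `a_i > b` implies
`f_A(a_1,…,a_i,…,a_n) ≥ f_A(a_1,…,b,…,a_n)`. -/
def WeaklyMonotone : Prop :=
  ∀ (f : F) (as : Fin (ar f) → A) (i : Fin (ar f)) (b : A),
    lt b (as i) → RC lt (I f (Function.update as i b)) (I f as)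

end Algebra

section WPO

variable {F V A : Type} (ar : F → ℕ) (I : (f : F) → (Fin (ar f) → A) → A)
  (lt : A → A → Prop) (prec : F → F → Prop)

mutual
  /-- The weighted path order induced by the algebra `(A, I, lt)` and the precedence `prec`. -/
  inductive WPO : Term F ar V → Term F ar V → Prop where
    /-- (1) `s >_A t`. -/
    | alg {s t} : GTA ar I lt s t → WPO s t
    /-- (2a) `s ≥_A t` and `s_i >_wpo t`. -/
    | sub {f ss t} (i : Fin (ar f)) :
        GEA ar I lt (Term.app f ss) t → WPO (ss i) t → WPO (Term.app f ss) t
    /-- (2a) `s ≥_A t` and `s_i = t`. -/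
    | subEq {f ss t} (i : Fin (ar f)) :
        GEA ar I lt (Term.app f ss) t → ss i = t → WPO (Term.app f ss) t
    /-- (2b-i) `s ≥_A t`, `s >_wpo t_j` for all `j`, and `f ≻ g`. -/
    | prc {f ss g ts} :
        GEA ar I lt (Term.app f ss) (Term.app g ts) →
        (∀ j, WPO (Term.app f ss) (ts j)) →
        prec f g → ¬ prec g f → WPO (Term.app f ss) (Term.app g ts)
    /-- (2b-ii) `s ≥_A t`, `s >_wpo t_j` for all `j`, `f ≿ g` and lex comparison of arguments. -/
    | lex {f ss g ts} :
        GEA ar I lt (Term.app f ss) (Term.app g ts) →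
        (∀ j, WPO (Term.app f ss) (ts j)) →
        prec f g → WPOLex (List.ofFn ss) (List.ofFn ts) →
        WPO (Term.app f ss) (Term.app g ts)

  /-- Lexicographic extension of `WPO` to argument lists (of possibly different lengths). -/
  inductive WPOLex : List (Term F ar V) → List (Term F ar V) → Prop where
    | head {s t l₁ l₂} : WPO s t → WPOLex (s :: l₁) (t :: l₂)
    | tail {s l₁ l₂} : WPOLex l₁ l₂ → WPOLex (s :: l₁) (s :: l₂)
    | longer {s l₁} : WPOLex (s :: l₁) []
end

end WPO

section SPO

variable {F V : Type} {ar : F → ℕ} (qge qgt : Term F ar V → Term F ar V → Prop)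

mutual
  /-- The semantic path order induced by the order pair `(qge, qgt)` (`⊒∼`, `⊐`). -/
  inductive SPO : Term F ar V → Term F ar V → Prop where
    /-- (1) `s_i >_spo t`. -/
    | sub {f ss t} (i : Fin (ar f)) : SPO (ss i) t → SPO (Term.app f ss) t
    /-- (1) `s_i = t`. -/
    | subEq {f ss t} (i : Fin (ar f)) : ss i = t → SPO (Term.app f ss) t
    /-- (2a) `s >_spo t_j` for all `j` and `s ⊐ t`. -/
    | gt {f ss g ts} : (∀ j, SPO (Term.app f ss) (ts j)) →
        qgt (Term.app f ss) (Term.app g ts) → SPO (Term.app f ss) (Term.app g ts)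
    /-- (2b) `s >_spo t_j` for all `j`, `s ⊒∼ t` and lex comparison of arguments. -/
    | lex {f ss g ts} : (∀ j, SPO (Term.app f ss) (ts j)) →
        qge (Term.app f ss) (Term.app g ts) →
        SPOLex (List.ofFn ss) (List.ofFn ts) → SPO (Term.app f ss) (Term.app g ts)

  /-- Lexicographic extension of `SPO` to argument lists. -/
  inductive SPOLex : List (Term F ar V) → List (Term F ar V) → Prop where
    | head {s t l₁ l₂} : SPO s t → SPOLex (s :: l₁) (t :: l₂)
    | tail {s l₁ l₂} : SPOLex l₁ l₂ → SPOLex (s :: l₁) (s :: l₂)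
    | longer {s l₁} : SPOLex (s :: l₁) []
end

end SPO

section Props

variable {F V : Type} {ar : F → ℕ}

/-- Closure under contexts: replacing one argument. -/
def ClosedCtx (R : Term F ar V → Term F ar V → Prop) : Prop :=
  ∀ (f : F) (args : Fin (ar f) → Term F ar V) (i : Fin (ar f)) (s t : Term F ar V),
    R s t → R (Term.app f (Function.update args i s)) (Term.app f (Function.update args i t))

/-- Closure under substitutions. -/
def ClosedSubst (R : Term F ar V → Term F ar V → Prop) : Prop :=
  ∀ (σ : V → Term F ar V) (s t : Term F ar V), R s t → R (s.subst σ) (t.subst σ)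

/-- A reduction order: a well-founded strict order closed under contexts and substitutions. -/
def ReductionOrder (R : Term F ar V → Term F ar V → Prop) : Prop :=
  (∀ s, ¬ R s s) ∧ Transitive R ∧ WellFounded (fun s t => R t s) ∧
    ClosedCtx R ∧ ClosedSubst R

/-- `Subterm t s` : `t` is a subterm of `s`. -/
inductive Subterm : Term F ar V → Term F ar V → Prop where
  | refl {t} : Subterm t t
  | arg {t f ss} (i : Fin (ar f)) : Subterm t (ss i) → Subterm t (Term.app f ss)

/-- `ProperSubterm t s` : `t` is a proper subterm of `s`. -/
def ProperSubterm (t s : Term F ar V) : Prop :=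
  ∃ (f : F) (ss : Fin (ar f) → Term F ar V) (i : Fin (ar f)),
    s = Term.app f ss ∧ Subterm t (ss i)

/-- The rewrite relation of a TRS `R`: closure of the rules under substitutions and contexts. -/
inductive Rewrite (R : Set (Term F ar V × Term F ar V)) : Term F ar V → Term F ar V → Prop where
  | rule {l r} (σ : V → Term F ar V) : (l, r) ∈ R → Rewrite R (l.subst σ) (r.subst σ)
  | ctx {s t} (f : F) (args : Fin (ar f) → Term F ar V) (i : Fin (ar f)) :
      Rewrite R s t →
      Rewrite R (Term.app f (Function.update args i s)) (Term.app f (Function.update args i t))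

end Props

section Pair

variable {F V A : Type} (ar : F → ℕ) (I : (f : F) → (Fin (ar f) → A) → A)
  (lt : A → A → Prop) (prec : F → F → Prop)

/-- `s ⊒∼ t` : both non-variable, and `s >_A t`, or `s ≥_A t` and `root(s) ≿ root(t)`. -/
def QGE (s t : Term F ar V) : Prop :=
  ∃ (f : F) (ss : Fin (ar f) → Term F ar V) (g : F) (ts : Fin (ar g) → Term F ar V),
    s = Term.app f ss ∧ t = Term.app g ts ∧
      (GTA ar I lt s t ∨ (GEA ar I lt s t ∧ prec f g))

/-- `s ⊐ t` : both non-variable, and `s >_A t`, or `s ≥_A t` and `root(s) ≻ root(t)`. -/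
def QGT (s t : Term F ar V) : Prop :=
  ∃ (f : F) (ss : Fin (ar f) → Term F ar V) (g : F) (ts : Fin (ar g) → Term F ar V),
    s = Term.app f ss ∧ t = Term.app g ts ∧
      (GTA ar I lt s t ∨ (GEA ar I lt s t ∧ prec f g ∧ ¬ prec g f))

variable (Im : (f : F) → (Fin (ar f) → A) → A)

/-- Interpretation of the marked term `t♯` (root symbol interpreted by `Im`). -/
def evalSharp (α : V → A) : Term F ar V → A
  | .var v => α v
  | .app f ts => Im f (fun i => (ts i).eval I α)

/-- `s♯ >_A t♯`. -/
def GTAS (s t : Term F ar V) : Prop :=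
  ∀ α : V → A, lt (evalSharp ar I Im α t) (evalSharp ar I Im α s)

/-- `s♯ ≥_A t♯`. -/
def GEAS (s t : Term F ar V) : Prop :=
  ∀ α : V → A, RC lt (evalSharp ar I Im α t) (evalSharp ar I Im α s)

/-- Marked version of `⊒∼` : `s♯ >_A t♯`, or `s♯ ≥_A t♯` and `root(s) ≿ root(t)`. -/
def QGES (s t : Term F ar V) : Prop :=
  ∃ (f : F) (ss : Fin (ar f) → Term F ar V) (g : F) (ts : Fin (ar g) → Term F ar V),
    s = Term.app f ss ∧ t = Term.app g ts ∧
      (GTAS ar I lt Im s t ∨ (GEAS ar I lt Im s t ∧ prec f g))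

/-- Marked version of `⊐` : `s♯ >_A t♯`, or `s♯ ≥_A t♯` and `root(s) ≻ root(t)`. -/
def QGTS (s t : Term F ar V) : Prop :=
  ∃ (f : F) (ss : Fin (ar f) → Term F ar V) (g : F) (ts : Fin (ar g) → Term F ar V),
    s = Term.app f ss ∧ t = Term.app g ts ∧
      (GTAS ar I lt Im s t ∨ (GEAS ar I lt Im s t ∧ prec f g ∧ ¬ prec g f))

/-- The generalized weighted path order: `s ≥_A t` and `s >_spo t` for the SPO induced
from the marked order pair. -/
def GWPO (s t : Term F ar V) : Prop :=
  GEA ar I lt s t ∧ SPO (QGES ar I lt prec Im) (QGTS ar I lt prec Im) s t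

end Pair

/-- Signature `{0, s, half, bits}`: symbol `0` is `zero` (arity 0), `1` is `s`,
`2` is `half`, `3` is `bits` (arity 1). -/
def ar18 : Fin 4 → ℕ
  | ⟨0, _⟩ => 0
  | ⟨1, _⟩ => 1
  | ⟨2, _⟩ => 1
  | ⟨3, _⟩ => 1

/-- Interpretations on `ℕ`: `0_A = 0`, `s_A(x) = x + 1`,
`half_A(x) = max {0, x − 1} = x - 1` (truncated subtraction), `bits_A(x) = x`. -/
def I18 : (f : Fin 4) → (Fin (ar18 f) → ℕ) → ℕ
  | ⟨0, _⟩, _ => 0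
  | ⟨1, _⟩, a => Matrix.vecHead a + 1
  | ⟨2, _⟩, a => Matrix.vecHead a - 1
  | ⟨3, _⟩, a => Matrix.vecHead a

/-- The constant `0`. -/
abbrev z18 : Term (Fin 4) ar18 ℕ := Term.app 0 ![]
/-- `s(t)`. -/
abbrev s18 (t : Term (Fin 4) ar18 ℕ) : Term (Fin 4) ar18 ℕ := Term.app 1 ![t]
/-- `half(t)`. -/
abbrev half18 (t : Term (Fin 4) ar18 ℕ) : Term (Fin 4) ar18 ℕ := Term.app 2 ![t]
/-- `bits(t)`. -/
abbrev bits18 (t : Term (Fin 4) ar18 ℕ) : Term (Fin 4) ar18 ℕ := Term.app 3 ![t]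
/-- The variable `x`. -/
abbrev x18 : Term (Fin 4) ar18 ℕ := Term.var 0

/-- For the algebra on `ℕ` with `0_A = 0`, `s_A(x) = x + 1`,
`half_A(x) = max {0, x − 1}`, `bits_A(x) = x` and `f♯_A = f_A` for every `f`, and every
precedence with `half ≻ s` and `bits ≻ s`, the induced generalized weighted path order
orients all five rules of the `bits` TRS. -/
theorem gwpo_orients_bits
    (prec : Fin 4 → Fin 4 → Prop) (prec_refl : ∀ f, prec f f)
    (prec_trans : ∀ f g h, prec f g → prec g h → prec f h)
    (half_gt_s : prec 2 1 ∧ ¬ prec 1 2)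
    (bits_gt_s : prec 3 1 ∧ ¬ prec 1 3) :
    GWPO ar18 I18 (· < ·) prec I18 (half18 z18) z18 ∧
    GWPO ar18 I18 (· < ·) prec I18 (half18 (s18 z18)) z18 ∧
    GWPO ar18 I18 (· < ·) prec I18 (half18 (s18 (s18 x18))) (s18 (half18 x18)) ∧
    GWPO ar18 I18 (· < ·) prec I18 (bits18 z18) z18 ∧
    GWPO ar18 I18 (· < ·) prec I18 (bits18 (s18 x18))
      (s18 (bits18 (half18 (s18 x18)))) := by
  obtain ⟨h21, hn12⟩ := half_gt_s
  obtain ⟨h31, hn13⟩ := bits_gt_s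
  refine ⟨⟨?_, ?_⟩, ⟨?_, ?_⟩, ⟨?_, ?_⟩, ⟨?_, ?_⟩, ⟨?_, ?_⟩⟩
  -- rule 1: half(0) > 0
  · exact fun α => (show (0:ℕ) ≤ 0 - 1 by omega).lt_or_eq
  · exact SPO.subEq (0 : Fin 1) rfl
  -- rule 2: half(s(0)) > 0
  · exact fun α => (show (0:ℕ) ≤ 0 + 1 - 1 by omega).lt_or_eq
  · exact SPO.sub (0 : Fin 1) (SPO.subEq (0 : Fin 1) rfl)
  -- rule 3: half(s(s(x))) > s(half(x))
  · exact fun α => (show (α 0 - 1) + 1 ≤ α 0 + 1 + 1 - 1 by omega).lt_or_eq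
  · refine SPO.gt (fun j => ?_) ?_
    · fin_cases j
      refine SPO.gt (fun j => ?_) ?_
      · fin_cases j
        exact SPO.sub (0 : Fin 1) (SPO.sub (0 : Fin 1) (SPO.subEq (0 : Fin 1) rfl))
      · exact ⟨2, ![s18 (s18 x18)], 2, ![x18], rfl, rfl,
          Or.inl fun α => show α 0 - 1 < α 0 + 1 + 1 - 1 by omega⟩
    · exact ⟨2, ![s18 (s18 x18)], 1, ![half18 x18], rfl, rfl,
        Or.inr ⟨fun α => (show (α 0 - 1) + 1 ≤ α 0 + 1 + 1 - 1 by omega).lt_or_eq,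
          h21, hn12⟩⟩
  -- rule 4: bits(0) > 0
  · exact fun α => Or.inr rfl
  · exact SPO.subEq (0 : Fin 1) rfl
  -- rule 5: bits(s(x)) > s(bits(half(s(x))))
  · exact fun α => (show (α 0 + 1 - 1) + 1 ≤ α 0 + 1 by omega).lt_or_eq
  · refine SPO.gt (fun j => ?_) ?_
    · fin_cases j
      refine SPO.gt (fun j => ?_) ?_
      · fin_cases j
        refine SPO.gt (fun j => ?_) ?_
        · fin_cases j
          exact SPO.subEq (0 : Fin 1) rfl
        · exact ⟨3, ![s18 x18], 2, ![s18 x18], rfl, rfl,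
            Or.inl fun α => show α 0 + 1 - 1 < α 0 + 1 by omega⟩
      · exact ⟨3, ![s18 x18], 3, ![half18 (s18 x18)], rfl, rfl,
          Or.inl fun α => show α 0 + 1 - 1 < α 0 + 1 by omega⟩
    · exact ⟨3, ![s18 x18], 1, ![bits18 (half18 (s18 x18))], rfl, rfl,
        Or.inr ⟨fun α => (show (α 0 + 1 - 1) + 1 ≤ α 0 + 1 by omega).lt_or_eq,
          h31, hn13⟩⟩
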